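/- Let f : ℝⁿ → ℝ be twice continuously differentiable with ∇²f Lipschitz continuous with constant L_H in the operator norm. Let μ ∈ (0, 1], β ∈ (0, 1), x ∈ ℝⁿ with x > 0 componentwise, and d ∈ ℝⁿ with ‖X⁻¹X̄d‖∞ ≤ β. Define g = X̄(∇f(x) − μX⁻¹e) and H = X̄(∇²f(x) + μX⁻²)X̄. Then for every α ∈ [0, 1], φ_μ(x + αX̄d) − φ_μ(x) ≤ α·gᵀd + (α²/2)·dᵀHd + ((L_H(1 − β)² + (2 − β))/(6(1 − β)²))·α³·‖d‖³. -/

import Mathlib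

open Matrix

/-- The Euclidean norm of a vector in `Fin n → ℝ`. -/
noncomputable def euclNorm {n : ℕ} (v : Fin n → ℝ) : ℝ := Real.sqrt (∑ i, (v i)^2)

/-- The operator norm (induced by the Euclidean norm) of a matrix. -/
noncomputable def opNorm {n : ℕ} (A : Matrix (Fin n) (Fin n) ℝ) : ℝ :=
  ‖Matrix.toEuclideanCLM (𝕜 := ℝ) A‖

/-- The continuous linear map `w ↦ ∑ i, v i * w i`. -/
noncomputable def dotCLM {n : ℕ} (v : Fin n → ℝ) : (Fin n → ℝ) →L[ℝ] ℝ :=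
  ∑ i, v i • (ContinuousLinearMap.proj i : (Fin n → ℝ) →L[ℝ] ℝ)

/-- The continuous linear map `w ↦ A *ᵥ w`. -/
noncomputable def mulVecCLM {n : ℕ} (A : Matrix (Fin n) (Fin n) ℝ) :
    (Fin n → ℝ) →L[ℝ] (Fin n → ℝ) :=
  LinearMap.toContinuousLinearMap A.mulVecLin

/-!
Along the step `x + α X̄ d` the barrier term splits as `f` plus a sum of scalar logarithms
`log (1 + α tᵢ)` with `t = X⁻¹ X̄ d`, `|tᵢ| ≤ β`.  For `f`, integrating the Lipschitz bound on the
Hessian twice along the segment gives the cubic Taylor bound with constant `L_H / 6`.  For each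
logarithm, comparing derivatives on `[0, s]` or `[s, 0]` gives
`log (1 + s) ≥ s - s² / 2 - |s|³ / (3 (1 - β))` for `|s| ≤ β`.  Since `X̄ ≤ I` and `X̄ ≤ X`, both
`X̄ d` and `t` are shorter than `d`, and `∑ |tᵢ|³ ≤ ‖t‖³`; finally `μ ≤ 1` and
`1 / (3 (1 - β)) ≤ (2 - β) / (6 (1 - β)²)`.
-/

open Set

section Norms

variable {n : ℕ}

lemma dotCLM_apply (v w : Fin n → ℝ) : dotCLM v w = v ⬝ᵥ w := by
  simp [dotCLM, dotProduct]

lemma mulVecCLM_apply (A : Matrix (Fin n) (Fin n) ℝ) (w : Fin n → ℝ) :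
    mulVecCLM A w = A *ᵥ w := rfl

lemma euclNorm_eq_norm_toLp (v : Fin n → ℝ) : euclNorm v = ‖WithLp.toLp 2 v‖ := by
  simp [euclNorm, EuclideanSpace.norm_eq, sq_abs]

lemma euclNorm_nonneg (v : Fin n → ℝ) : 0 ≤ euclNorm v := Real.sqrt_nonneg _

lemma euclNorm_smul (c : ℝ) (v : Fin n → ℝ) : euclNorm (c • v) = |c| * euclNorm v := by
  simp only [euclNorm_eq_norm_toLp, WithLp.toLp_smul, norm_smul, Real.norm_eq_abs]

lemma sq_euclNorm (v : Fin n → ℝ) : euclNorm v ^ 2 = ∑ i, v i ^ 2 :=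
  Real.sq_sqrt (by positivity)

lemma abs_le_euclNorm (v : Fin n → ℝ) (i : Fin n) : |v i| ≤ euclNorm v := by
  rw [← Real.sqrt_sq_eq_abs]
  exact Real.sqrt_le_sqrt (Finset.single_le_sum (fun j _ => sq_nonneg (v j)) (Finset.mem_univ i))

lemma euclNorm_mul_le {w : Fin n → ℝ} (hw : ∀ i, |w i| ≤ 1) (v : Fin n → ℝ) :
    euclNorm (fun i => w i * v i) ≤ euclNorm v := by
  refine Real.sqrt_le_sqrt (Finset.sum_le_sum fun i _ => sq_le_sq.mpr ?_)
  rw [abs_mul]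
  exact mul_le_of_le_one_left (abs_nonneg _) (hw i)

lemma sum_abs_pow_three_le_euclNorm_pow_three (v : Fin n → ℝ) :
    ∑ i, |v i| ^ 3 ≤ euclNorm v ^ 3 := calc
  ∑ i, |v i| ^ 3 = ∑ i, |v i| * v i ^ 2 := by simp only [← sq_abs (v _)]; ring_nf
  _ ≤ ∑ i, euclNorm v * v i ^ 2 :=
    Finset.sum_le_sum fun i _ => by gcongr; exact abs_le_euclNorm v i
  _ = euclNorm v ^ 3 := by rw [← Finset.mul_sum, ← sq_euclNorm]; ring

lemma dotProduct_mulVec_le_opNorm (A : Matrix (Fin n) (Fin n) ℝ) (a b : Fin n → ℝ) :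
    a ⬝ᵥ (A *ᵥ b) ≤ opNorm A * euclNorm a * euclNorm b := by
  have hinner : a ⬝ᵥ (A *ᵥ b) =
      inner ℝ (WithLp.toLp 2 a) (Matrix.toEuclideanCLM (𝕜 := ℝ) A (WithLp.toLp 2 b)) := by
    simp [Matrix.toEuclideanCLM_toLp, PiLp.inner_apply, dotProduct, mul_comm]
  rw [hinner, euclNorm_eq_norm_toLp, euclNorm_eq_norm_toLp]
  calc _ ≤ ‖WithLp.toLp 2 a‖ * ‖Matrix.toEuclideanCLM (𝕜 := ℝ) A (WithLp.toLp 2 b)‖ :=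
        real_inner_le_norm _ _
    _ ≤ ‖WithLp.toLp 2 a‖ * (opNorm A * ‖WithLp.toLp 2 b‖) := by
        gcongr; exact ContinuousLinearMap.le_opNorm _ _
    _ = _ := by ring

end Norms

lemma sub_le_sub_of_hasDerivAt_le {F G F' G' : ℝ → ℝ} {a b : ℝ} (hab : a ≤ b)
    (hF : ∀ s ∈ Icc a b, HasDerivAt F (F' s) s) (hG : ∀ s ∈ Icc a b, HasDerivAt G (G' s) s)
    (h : ∀ s ∈ Ioo a b, F' s ≤ G' s) : F b - F a ≤ G b - G a := by
  have hmono : MonotoneOn (fun s => G s - F s) (Icc a b) := by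
    refine monotoneOn_of_hasDerivWithinAt_nonneg (convex_Icc a b)
      (fun s hs => ((hG s hs).sub (hF s hs)).continuousAt.continuousWithinAt)
      (fun s hs => ((hG s (interior_subset hs)).sub (hF s (interior_subset hs))).hasDerivWithinAt)
      ?_
    rw [interior_Icc]
    exact fun s hs => sub_nonneg.mpr (h s hs)
  linarith [hmono (left_mem_Icc.mpr hab) (right_mem_Icc.mpr hab) hab]

lemma le_taylor_two_add_cubic_of_deriv2_le {φ φ' φ'' : ℝ → ℝ} {K s : ℝ}
    (hφ : ∀ r, HasDerivAt φ (φ' r) r) (hφ' : ∀ r, HasDerivAt φ' (φ'' r) r)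
    (hK : ∀ r, 0 < r → φ'' r ≤ φ'' 0 + K * r) (hs : 0 ≤ s) :
    φ s ≤ φ 0 + φ' 0 * s + φ'' 0 / 2 * s ^ 2 + K / 6 * s ^ 3 := by
  have hφ'_le : ∀ r, 0 ≤ r → φ' r - φ' 0 ≤ φ'' 0 * r + K / 2 * r ^ 2 := by
    intro r hr
    have := sub_le_sub_of_hasDerivAt_le hr (fun q _ => hφ' q)
      (G := fun q => φ'' 0 * q + K / 2 * q ^ 2) (G' := fun q => φ'' 0 + K * q)
      (fun q _ => (((hasDerivAt_id' q).const_mul _).add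
        ((hasDerivAt_pow 2 q).const_mul _)).congr_deriv (by ring))
      (fun q hq => hK q hq.1)
    simpa using this
  have := sub_le_sub_of_hasDerivAt_le hs (fun r _ => hφ r)
    (G := fun r => φ' 0 * r + φ'' 0 / 2 * r ^ 2 + K / 6 * r ^ 3)
    (G' := fun r => φ' 0 + φ'' 0 * r + K / 2 * r ^ 2)
    (fun r _ => ((((hasDerivAt_id' r).const_mul _).add ((hasDerivAt_pow 2 r).const_mul _)).add
      ((hasDerivAt_pow 3 r).const_mul _)).congr_deriv (by ring))
    (fun r hr => by linarith [hφ'_le r hr.1.le])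
  simp only [mul_zero, ne_eq, OfNat.ofNat_ne_zero, not_false_eq_true, zero_pow, add_zero,
    sub_zero] at this
  linarith

theorem apply_add_smul_le_of_hessian_lipschitz {n : ℕ} {f : (Fin n → ℝ) → ℝ}
    {gradf : (Fin n → ℝ) → (Fin n → ℝ)} {hessf : (Fin n → ℝ) → Matrix (Fin n) (Fin n) ℝ}
    (hgrad : ∀ y, HasFDerivAt f (dotCLM (gradf y)) y)
    (hhess : ∀ y, HasFDerivAt gradf (mulVecCLM (hessf y)) y) {L : ℝ}
    (hlip : ∀ y z, opNorm (hessf y - hessf z) ≤ L * euclNorm (y - z))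
    (x v : Fin n → ℝ) {α : ℝ} (hα : 0 ≤ α) :
    f (x + α • v) ≤ f x + α * (gradf x ⬝ᵥ v) + α ^ 2 / 2 * (v ⬝ᵥ (hessf x *ᵥ v))
      + L / 6 * α ^ 3 * euclNorm v ^ 3 := by
  have hline : ∀ r : ℝ, HasDerivAt (fun r : ℝ => x + r • v) v r := fun r => by
    simpa using ((hasDerivAt_id r).smul_const v).const_add x
  have hφ : ∀ r : ℝ, HasDerivAt (fun r => f (x + r • v)) (gradf (x + r • v) ⬝ᵥ v) r := fun r => by
    simpa only [Function.comp_def, dotCLM_apply] using (hgrad _).comp_hasDerivAt r (hline r)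
  have hφ' : ∀ r : ℝ, HasDerivAt (fun r => gradf (x + r • v) ⬝ᵥ v)
      (v ⬝ᵥ (hessf (x + r • v) *ᵥ v)) r := fun r => by
    simpa only [Function.comp_def, mulVecCLM_apply, dotCLM_apply, dotProduct_comm v] using
      (dotCLM v).hasFDerivAt.comp_hasDerivAt r ((hhess _).comp_hasDerivAt r (hline r))
  have hK : ∀ r : ℝ, 0 < r → v ⬝ᵥ (hessf (x + r • v) *ᵥ v)
      ≤ v ⬝ᵥ (hessf (x + (0 : ℝ) • v) *ᵥ v) + L * euclNorm v ^ 3 * r := fun r hr => by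
    have hdist : opNorm (hessf (x + r • v) - hessf x) ≤ L * (r * euclNorm v) := by
      simpa [euclNorm_smul, abs_of_pos hr] using hlip (x + r • v) x
    have hquad := dotProduct_mulVec_le_opNorm (hessf (x + r • v) - hessf x) v v
    rw [sub_mulVec, dotProduct_sub] at hquad
    have hscaled : opNorm (hessf (x + r • v) - hessf x) * euclNorm v * euclNorm v
        ≤ L * (r * euclNorm v) * euclNorm v * euclNorm v := by
      gcongr <;> exact euclNorm_nonneg v
    simp only [zero_smul, add_zero]
    linarith
  have := le_taylor_two_add_cubic_of_deriv2_le hφ hφ' hK hα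
  simp only [zero_smul, add_zero] at this
  linarith

lemma inv_one_add_eq (t : ℝ) (ht : 1 + t ≠ 0) : (1 + t)⁻¹ = 1 - t + t ^ 2 / (1 + t) := by
  field_simp
  ring

lemma log_one_add_ge {β s : ℝ} (hβ : β < 1) (hs : |s| ≤ β) :
    s - s ^ 2 / 2 - |s| ^ 3 / (3 * (1 - β)) ≤ Real.log (1 + s) := by
  have hlog : ∀ t : ℝ, 0 < 1 + t → HasDerivAt (fun t => Real.log (1 + t)) (1 + t)⁻¹ t :=
    fun t ht => by simpa using ((hasDerivAt_id t).const_add 1).log ht.ne'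
  rcases le_or_gt 0 s with hs0 | hs0
  · have := sub_le_sub_of_hasDerivAt_le hs0 (G := fun t => Real.log (1 + t))
      (F := fun t => t - t ^ 2 / 2) (F' := fun t => 1 - t) (G' := fun t => (1 + t)⁻¹)
      (fun t _ => ((hasDerivAt_id' t).sub ((hasDerivAt_pow 2 t).div_const 2)).congr_deriv
        (by ring))
      (fun t ht => hlog t (by linarith [ht.1]))
      (fun t ht => by
        rw [inv_one_add_eq t (by linarith [ht.1])]
        have : 0 ≤ t ^ 2 / (1 + t) := by have := ht.1; positivity
        linarith)
    have : 0 ≤ |s| ^ 3 / (3 * (1 - β)) := by have := sub_pos.mpr hβ; positivity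
    norm_num at *
    linarith
  · have hsβ : -β ≤ s := (abs_le.mp hs).1
    have := sub_le_sub_of_hasDerivAt_le hs0.le (F := fun t => Real.log (1 + t))
      (G := fun t => t - t ^ 2 / 2 + t ^ 3 / (3 * (1 - β))) (F' := fun t => (1 + t)⁻¹)
      (G' := fun t => 1 - t + t ^ 2 / (1 - β))
      (fun t ht => hlog t (by linarith [ht.1]))
      (fun t _ => (((hasDerivAt_id' t).sub ((hasDerivAt_pow 2 t).div_const 2)).add
        ((hasDerivAt_pow 3 t).div_const _)).congr_deriv (by field_simp; ring))
      (fun t ht => by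
        rw [inv_one_add_eq t (by linarith [ht.1])]
        have : t ^ 2 / (1 + t) ≤ t ^ 2 / (1 - β) :=
          div_le_div_of_nonneg_left (sq_nonneg t) (by linarith) (by linarith [ht.1])
        linarith)
    have hcube : |s| ^ 3 / (3 * (1 - β)) = -(s ^ 3 / (3 * (1 - β))) := by
      rw [abs_of_neg hs0]; ring
    norm_num at this
    linarith

lemma abs_mul_le_of_mem_Icc {α a β : ℝ} (hα : α ∈ Icc 0 1) (ha : |a| ≤ β) : |α * a| ≤ β := by
  rw [abs_mul, abs_of_nonneg hα.1]
  exact (mul_le_of_le_one_left (abs_nonneg a) hα.2).trans ha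

lemma neg_mul_sum_log_one_add_le {n : ℕ} {β μ α : ℝ} (hβ : β ∈ Ioo 0 1) (hμ : μ ∈ Ioc 0 1)
    (hα : α ∈ Icc 0 1) {t : Fin n → ℝ} (ht : ∀ i, |t i| ≤ β) :
    -(μ * ∑ i, Real.log (1 + α * t i)) ≤ -(α * (μ * ∑ i, t i)) + α ^ 2 / 2 * (μ * ∑ i, t i ^ 2)
      + (2 - β) / (6 * (1 - β) ^ 2) * α ^ 3 * ∑ i, |t i| ^ 3 := by
  have h1β : 0 < 1 - β := sub_pos.mpr hβ.2
  have hconst : μ / (3 * (1 - β)) ≤ (2 - β) / (6 * (1 - β) ^ 2) := by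
    rw [div_le_div_iff₀ (by positivity) (by positivity)]
    nlinarith [hμ.2, hβ.1]
  have hterm : ∀ i, -(μ * Real.log (1 + α * t i)) ≤ -(α * (μ * t i)) + α ^ 2 / 2 * (μ * t i ^ 2)
      + (2 - β) / (6 * (1 - β) ^ 2) * α ^ 3 * |t i| ^ 3 := fun i => by
    have hlog := log_one_add_ge hβ.2 (abs_mul_le_of_mem_Icc hα (ht i))
    rw [abs_mul, abs_of_nonneg hα.1, mul_pow, mul_pow] at hlog
    have hcubic : μ * (α ^ 3 * |t i| ^ 3 / (3 * (1 - β)))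
        ≤ (2 - β) / (6 * (1 - β) ^ 2) * α ^ 3 * |t i| ^ 3 := by
      rw [mul_div_assoc', mul_comm μ, mul_div_assoc, mul_comm, mul_assoc]
      exact mul_le_mul_of_nonneg_right hconst (by have := hα.1; positivity)
    nlinarith [mul_le_mul_of_nonneg_left hlog hμ.1.le]
  have := Finset.sum_le_sum fun i (_ : i ∈ Finset.univ) => hterm i
  simpa only [Finset.sum_add_distrib, Finset.sum_neg_distrib, ← Finset.mul_sum] using this

lemma scaled_gradient_dotProduct {n : ℕ} (w x G d : Fin n → ℝ) (μ : ℝ) :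
    (fun i => w i * (G i - μ / x i)) ⬝ᵥ d
      = G ⬝ᵥ (fun i => w i * d i) - μ * ∑ i, w i / x i * d i := by
  simp only [dotProduct, Finset.mul_sum, ← Finset.sum_sub_distrib]
  exact Finset.sum_congr rfl fun i _ => by ring

lemma scaled_hessian_quadratic {n : ℕ} (w x d : Fin n → ℝ) (A : Matrix (Fin n) (Fin n) ℝ)
    (μ : ℝ) :
    d ⬝ᵥ ((diagonal w * (A + μ • diagonal (fun i => (x i ^ 2)⁻¹)) * diagonal w) *ᵥ d)
      = (fun i => w i * d i) ⬝ᵥ (A *ᵥ fun i => w i * d i) + μ * ∑ i, (w i / x i * d i) ^ 2 := by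
  have hw : diagonal w *ᵥ d = fun i => w i * d i := funext fun i => mulVec_diagonal w d i
  rw [← mulVec_mulVec, ← mulVec_mulVec, hw, dotProduct_comm, ← vecMul_transpose,
    diagonal_transpose, ← dotProduct_mulVec, hw, dotProduct_comm, add_mulVec, smul_mulVec,
    dotProduct_add, dotProduct_smul, smul_eq_mul]
  congr 2
  simp only [dotProduct, mulVec_diagonal]
  exact Finset.sum_congr rfl fun i _ => by ring

lemma abs_min_one_le_one {a : ℝ} (ha : 0 < a) : |min a 1| ≤ 1 := by
  rw [abs_of_pos (lt_min ha one_pos)]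
  exact min_le_right a 1

lemma abs_min_one_div_le_one {a : ℝ} (ha : 0 < a) : |min a 1 / a| ≤ 1 := by
  rw [abs_of_pos (div_pos (lt_min ha one_pos) ha), div_le_one ha]
  exact min_le_left a 1

lemma sum_log_add_smul_mul {n : ℕ} {x w d : Fin n → ℝ} (hx : ∀ i, 0 < x i) {α : ℝ}
    (hpos : ∀ i, 0 < 1 + α * (w i / x i * d i)) :
    ∑ i, Real.log ((x + α • fun i => w i * d i) i)
      = ∑ i, Real.log (x i) + ∑ i, Real.log (1 + α * (w i / x i * d i)) := by
  rw [← Finset.sum_add_distrib]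
  refine Finset.sum_congr rfl fun i _ => ?_
  rw [← Real.log_mul (hx i).ne' (hpos i).ne']
  congr 1
  simp only [Pi.add_apply, Pi.smul_apply, smul_eq_mul]
  field_simp [(hx i).ne']

theorem stmt7_general {n : ℕ}
    (f : (Fin n → ℝ) → ℝ)
    (gradf : (Fin n → ℝ) → (Fin n → ℝ))
    (hessf : (Fin n → ℝ) → Matrix (Fin n) (Fin n) ℝ)
    (hgrad : ∀ y : Fin n → ℝ, HasFDerivAt f (dotCLM (gradf y)) y)
    (hhess : ∀ y : Fin n → ℝ, HasFDerivAt gradf (mulVecCLM (hessf y)) y)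
    (L_H : ℝ) (hLH : 0 ≤ L_H)
    (hlip : ∀ y z : Fin n → ℝ, opNorm (hessf y - hessf z) ≤ L_H * euclNorm (y - z))
    (μ : ℝ) (hμ : μ ∈ Set.Ioc (0:ℝ) 1)
    (β : ℝ) (hβ : β ∈ Set.Ioo (0:ℝ) 1)
    (x : Fin n → ℝ) (hx : ∀ i, 0 < x i)
    (d : Fin n → ℝ)
    (hd : ‖(fun i => (min (x i) 1 / x i) * d i : Fin n → ℝ)‖ ≤ β)
    (g : Fin n → ℝ)
    (hg : g = fun i => min (x i) 1 * (gradf x i - μ / x i))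
    (H : Matrix (Fin n) (Fin n) ℝ)
    (hH : H = Matrix.diagonal (fun i => min (x i) 1)
        * (hessf x + μ • Matrix.diagonal (fun i => ((x i)^2)⁻¹))
        * Matrix.diagonal (fun i => min (x i) 1)) :
    ∀ α ∈ Set.Icc (0:ℝ) 1,
      (f (x + α • (fun i => min (x i) 1 * d i : Fin n → ℝ))
          - μ * ∑ i, Real.log ((x + α • (fun i => min (x i) 1 * d i : Fin n → ℝ)) i))
        - (f x - μ * ∑ i, Real.log (x i))
      ≤ α * (g ⬝ᵥ d) + (α^2/2) * (d ⬝ᵥ (H *ᵥ d))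
        + ((L_H * (1-β)^2 + (2-β)) / (6 * (1-β)^2)) * α^3 * euclNorm d ^ 3 := by
  intro α hα
  set p : Fin n → ℝ := fun i => min (x i) 1 * d i
  set t : Fin n → ℝ := fun i => min (x i) 1 / x i * d i
  have ht : ∀ i, |t i| ≤ β := fun i => (norm_le_pi_norm t i).trans hd
  have hlog := sum_log_add_smul_mul hx (w := fun i => min (x i) 1) (d := d) (α := α) fun i => by
    linarith [(abs_le.mp (abs_mul_le_of_mem_Icc hα (ht i))).1, hβ.2]
  have hp : euclNorm p ≤ euclNorm d := euclNorm_mul_le (fun i => abs_min_one_le_one (hx i)) d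
  have htd : euclNorm t ≤ euclNorm d := euclNorm_mul_le (fun i => abs_min_one_div_le_one (hx i)) d
  have hf := apply_add_smul_le_of_hessian_lipschitz hgrad hhess hlip x p hα.1
  have hbarrier := neg_mul_sum_log_one_add_le hβ hμ hα ht
  have hp3 : L_H / 6 * α ^ 3 * euclNorm p ^ 3 ≤ L_H / 6 * α ^ 3 * euclNorm d ^ 3 := by
    have := hα.1; gcongr; exact euclNorm_nonneg p
  have ht3 : (2 - β) / (6 * (1 - β) ^ 2) * α ^ 3 * ∑ i, |t i| ^ 3
      ≤ (2 - β) / (6 * (1 - β) ^ 2) * α ^ 3 * euclNorm d ^ 3 := by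
    refine mul_le_mul_of_nonneg_left ((sum_abs_pow_three_le_euclNorm_pow_three t).trans
      (pow_le_pow_left₀ (euclNorm_nonneg t) htd 3)) (mul_nonneg ?_ (pow_nonneg hα.1 3))
    exact div_nonneg (by linarith [hβ.2]) (by positivity)
  have hcoef : (L_H * (1 - β) ^ 2 + (2 - β)) / (6 * (1 - β) ^ 2)
      = L_H / 6 + (2 - β) / (6 * (1 - β) ^ 2) := by
    field_simp [(sub_pos.mpr hβ.2).ne']
  rw [hg, hH, scaled_gradient_dotProduct, scaled_hessian_quadratic, hlog, hcoef]
  linarith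

/-- let `f` be twice continuously differentiable with gradient `gradf` and
Hessian `hessf`, with `hessf` Lipschitz of constant `L_H` in the operator norm.
For `μ ∈ (0,1]`, `β ∈ (0,1)`, `x > 0`, and `d` with `‖X⁻¹X̄d‖∞ ≤ β`, setting
`g = X̄(∇f(x) − μX⁻¹e)` and `H = X̄(∇²f(x) + μX⁻²)X̄`, for every `α ∈ [0,1]`:
`φ_μ(x + αX̄d) − φ_μ(x) ≤ α gᵀd + (α²/2) dᵀHd + ((L_H(1−β)² + (2−β))/(6(1−β)²)) α³ ‖d‖³`,
where `φ_μ(y) = f(y) − μ Σᵢ log yᵢ` and `‖d‖` is the Euclidean norm. -/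
theorem stmt7 {n : ℕ}
    (f : (Fin n → ℝ) → ℝ)
    (gradf : (Fin n → ℝ) → (Fin n → ℝ))
    (hessf : (Fin n → ℝ) → Matrix (Fin n) (Fin n) ℝ)
    (hgrad : ∀ y : Fin n → ℝ, HasFDerivAt f (dotCLM (gradf y)) y)
    (hhess : ∀ y : Fin n → ℝ, HasFDerivAt gradf (mulVecCLM (hessf y)) y)
    (hhesscont : Continuous hessf)
    (L_H : ℝ) (hLH : 0 ≤ L_H)
    (hlip : ∀ y z : Fin n → ℝ, opNorm (hessf y - hessf z) ≤ L_H * euclNorm (y - z))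
    (μ : ℝ) (hμ : μ ∈ Set.Ioc (0:ℝ) 1)
    (β : ℝ) (hβ : β ∈ Set.Ioo (0:ℝ) 1)
    (x : Fin n → ℝ) (hx : ∀ i, 0 < x i)
    (d : Fin n → ℝ)
    (hd : ‖(fun i => (min (x i) 1 / x i) * d i : Fin n → ℝ)‖ ≤ β)
    (g : Fin n → ℝ)
    (hg : g = fun i => min (x i) 1 * (gradf x i - μ / x i))
    (H : Matrix (Fin n) (Fin n) ℝ)
    (hH : H = Matrix.diagonal (fun i => min (x i) 1)
        * (hessf x + μ • Matrix.diagonal (fun i => ((x i)^2)⁻¹))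
        * Matrix.diagonal (fun i => min (x i) 1)) :
    ∀ α ∈ Set.Icc (0:ℝ) 1,
      (f (x + α • (fun i => min (x i) 1 * d i : Fin n → ℝ))
          - μ * ∑ i, Real.log ((x + α • (fun i => min (x i) 1 * d i : Fin n → ℝ)) i))
        - (f x - μ * ∑ i, Real.log (x i))
      ≤ α * (g ⬝ᵥ d) + (α^2/2) * (d ⬝ᵥ (H *ᵥ d))
        + ((L_H * (1-β)^2 + (2-β)) / (6 * (1-β)^2)) * α^3 * euclNorm d ^ 3 :=
  stmt7_general f gradf hessf hgrad hhess L_H hLH hlip μ hμ β hβ x hx d hd g hg H hH
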